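/- arXiv:1111.5247 — 6 statements merged into one kernel-verified Lean document; each statement's English description precedes it below -/
import Mathlib

section
/- Let V be a finite-dimensional complex inner product space, let P be an orthogonal projection on V (a self-adjoint linear map with P ∘ P = P), and let v₁, v₂ ∈ V be unit vectors. Set q₁ = ⟨v₁, P v₁⟩ and q₂ = ⟨v₂, P v₂⟩ (these are real numbers). If δ ≥ 0 and |⟨v₁, v₂⟩|² ≥ 1 − δ, then |q₁ − q₂| ≤ √δ. -/
open scoped InnerProductSpace

/-- **Claim (close rejecting probability).** If `P` is an orthogonal projection on a
finite-dimensional complex inner product space and `v₁, v₂` are unit vectors with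
`|⟨v₁, v₂⟩|² ≥ 1 − δ`, then the acceptance probabilities `qᵢ = ⟨vᵢ, P vᵢ⟫` satisfy
`|q₁ − q₂| ≤ √δ`. -/
theorem close_rejecting_probability
    {V : Type*} [NormedAddCommGroup V] [InnerProductSpace ℂ V] [FiniteDimensional ℂ V]
    (P : V →ₗ[ℂ] V)
    (hP_sa : ∀ x y : V, ⟪P x, y⟫_ℂ = ⟪x, P y⟫_ℂ)
    (hP_idem : P ∘ₗ P = P)
    (v₁ v₂ : V) (hv₁ : ‖v₁‖ = 1) (hv₂ : ‖v₂‖ = 1)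
    (q₁ q₂ : ℝ) (hq₁ : (q₁ : ℂ) = ⟪v₁, P v₁⟫_ℂ) (hq₂ : (q₂ : ℂ) = ⟪v₂, P v₂⟫_ℂ)
    (δ : ℝ) (hδ : 0 ≤ δ)
    (hoverlap : 1 - δ ≤ ‖⟪v₁, v₂⟫_ℂ‖ ^ 2) :
    |q₁ - q₂| ≤ Real.sqrt δ := by
  have hPP : ∀ x : V, P (P x) = P x := fun x =>
    congrArg (fun f : V →ₗ[ℂ] V => f x) hP_idem
  have hker : ∀ x : V, P (x - P x) = 0 := fun x => by
    rw [map_sub, hPP, sub_self]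
  -- orthogonality of range and "kernel" parts
  have horth : ∀ x y : V, ⟪P x, y - P y⟫_ℂ = 0 := fun x y => by
    rw [hP_sa, hker, inner_zero_right]
  set a := ‖P v₁‖ with ha
  set b := ‖v₁ - P v₁‖ with hb
  set c := ‖P v₂‖ with hc
  set d := ‖v₂ - P v₂‖ with hd
  have ha0 : 0 ≤ a := norm_nonneg _
  have hb0 : 0 ≤ b := norm_nonneg _
  have hc0 : 0 ≤ c := norm_nonneg _
  have hd0 : 0 ≤ d := norm_nonneg _
  -- q₁ = a², q₂ = c²
  have hq : ∀ (x : V) (q : ℝ), (q : ℂ) = ⟪x, P x⟫_ℂ → q = ‖P x‖ ^ 2 := by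
    intro x q h
    have e : ⟪P x, P x⟫_ℂ = ⟪x, P x⟫_ℂ := by rw [hP_sa, hPP]
    have : (q : ℂ) = ((‖P x‖ : ℂ)) ^ 2 := by
      rw [h, ← e, inner_self_eq_norm_sq_to_K]; norm_cast
    exact_mod_cast this
  have hqa : q₁ = a ^ 2 := hq v₁ q₁ hq₁
  have hqc : q₂ = c ^ 2 := hq v₂ q₂ hq₂
  -- Pythagoras
  have hpyth : ∀ x : V, ‖x‖ * ‖x‖ = ‖P x‖ * ‖P x‖ + ‖x - P x‖ * ‖x - P x‖ := by
    intro x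
    have := norm_add_sq_eq_norm_sq_add_norm_sq_of_inner_eq_zero (𝕜 := ℂ)
      (P x) (x - P x) (horth x x)
    simpa using this
  have hab : a ^ 2 + b ^ 2 = 1 := by
    have := hpyth v₁; rw [hv₁] at this; nlinarith [this]
  have hcd : c ^ 2 + d ^ 2 = 1 := by
    have := hpyth v₂; rw [hv₂] at this; nlinarith [this]
  -- overlap decomposition
  have hdecomp : ⟪v₁, v₂⟫_ℂ = ⟪P v₁, P v₂⟫_ℂ + ⟪v₁ - P v₁, v₂ - P v₂⟫_ℂ := by
    have h1 : ⟪v₁, P v₂⟫_ℂ = ⟪P v₁, P v₂⟫_ℂ := by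
      rw [hP_sa, hPP]
    have h2 : ⟪v₁, v₂ - P v₂⟫_ℂ = ⟪v₁ - P v₁, v₂ - P v₂⟫_ℂ := by
      have : ⟪P v₁, v₂ - P v₂⟫_ℂ = 0 := horth v₁ v₂
      rw [inner_sub_left, this, sub_zero]
    calc ⟪v₁, v₂⟫_ℂ = ⟪v₁, P v₂ + (v₂ - P v₂)⟫_ℂ := by rw [add_sub_cancel]
      _ = ⟪v₁, P v₂⟫_ℂ + ⟪v₁, v₂ - P v₂⟫_ℂ := inner_add_right _ _ _
      _ = _ := by rw [h1, h2]
  have hover : ‖⟪v₁, v₂⟫_ℂ‖ ≤ a * c + b * d := by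
    rw [hdecomp]
    calc ‖⟪P v₁, P v₂⟫_ℂ + ⟪v₁ - P v₁, v₂ - P v₂⟫_ℂ‖
        ≤ ‖⟪P v₁, P v₂⟫_ℂ‖ + ‖⟪v₁ - P v₁, v₂ - P v₂⟫_ℂ‖ := norm_add_le _ _
      _ ≤ a * c + b * d :=
        add_le_add (norm_inner_le_norm _ _) (norm_inner_le_norm _ _)
  have hs : 1 - δ ≤ (a * c + b * d) ^ 2 := by
    exact hoverlap.trans (pow_le_pow_left₀ (norm_nonneg _) hover 2)
  -- key algebraic inequality
  have key : (a ^ 2 - c ^ 2) ^ 2 ≤ δ := by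
    have h1 : (a * d - b * c) ^ 2 ≤ δ := by nlinarith [hs, hab, hcd]
    have h2 : (a * d + b * c) ^ 2 ≤ 1 := by nlinarith [sq_nonneg (a*c - b*d), hab, hcd]
    have h3 : a ^ 2 - c ^ 2 = (a * d - b * c) * (a * d + b * c) := by
      linear_combination (-(a^2)) * hcd + c^2 * hab
    calc (a ^ 2 - c ^ 2) ^ 2 = (a * d - b * c) ^ 2 * (a * d + b * c) ^ 2 := by
          rw [h3]; ring
      _ ≤ δ * 1 := by
          apply mul_le_mul h1 h2 (sq_nonneg _) hδ
      _ = δ := mul_one _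
  rw [hqa, hqc, ← Real.sqrt_sq_eq_abs]
  exact Real.sqrt_le_sqrt key
end

section
/- Let V be a finite-dimensional complex inner product space and let A₁, A₂ be positive-semidefinite self-adjoint linear operators on V with null spaces L₁ = ker A₁ and L₂ = ker A₂ satisfying L₁ ∩ L₂ = {0}. Suppose v > 0 is such that ⟨x, Aᵢ x⟩ ≥ v‖x‖² for every x orthogonal to Lᵢ (i = 1, 2). Let c = sup{|⟨x, y⟩| : x ∈ L₁, y ∈ L₂, ‖x‖ = ‖y‖ = 1}. Then for every x ∈ V, ⟨x, (A₁ + A₂) x⟩ ≥ v(1 − c)‖x‖². -/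
open scoped InnerProductSpace

/-!
Write `Pᵢ` for the orthogonal projection onto `Lᵢ = ker Aᵢ`. By self-adjointness `Aᵢ` only sees the
component `x - Pᵢ x ∈ Lᵢᗮ`, so the gap gives `⟨x, Aᵢ x⟩ ≥ v (‖x‖² - ‖Pᵢ x‖²)`. It remains to show
`‖P₁ x‖² + ‖P₂ x‖² ≤ (1 + c) ‖x‖²`: the left side is `re ⟨P₁ x + P₂ x, x⟩ ≤ ‖P₁ x + P₂ x‖ ‖x‖`, and
the angle bound `|⟨a, b⟩| ≤ c ‖a‖ ‖b‖` for `a ∈ L₁`, `b ∈ L₂` gives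
`‖P₁ x + P₂ x‖² ≤ (1 + c) (‖P₁ x‖² + ‖P₂ x‖²)`.
-/

section

open RCLike

variable {𝕜 E : Type*} [RCLike 𝕜] [NormedAddCommGroup E] [InnerProductSpace 𝕜 E]

namespace Submodule

-- Equals `sSup ∅ = 0` when either subspace is trivial.
noncomputable def cosAngle (K₁ K₂ : Submodule 𝕜 E) : ℝ :=
  sSup {r : ℝ | ∃ x ∈ K₁, ∃ y ∈ K₂, ‖x‖ = 1 ∧ ‖y‖ = 1 ∧ r = ‖⟪x, y⟫_𝕜‖}

variable (K₁ K₂ : Submodule 𝕜 E)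

theorem bddAbove_cosAngle_set :
    BddAbove {r : ℝ | ∃ x ∈ K₁, ∃ y ∈ K₂, ‖x‖ = 1 ∧ ‖y‖ = 1 ∧ r = ‖⟪x, y⟫_𝕜‖} := by
  refine ⟨1, ?_⟩
  rintro r ⟨x, -, y, -, hx, hy, rfl⟩
  simpa [hx, hy] using norm_inner_le_norm (𝕜 := 𝕜) x y

theorem cosAngle_nonneg : 0 ≤ cosAngle K₁ K₂ :=
  Real.sSup_nonneg fun _ ⟨_, _, _, _, _, _, hr⟩ ↦ hr ▸ norm_nonneg _

variable {K₁ K₂}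

theorem norm_inner_le_cosAngle_mul {x y : E} (hx : x ∈ K₁) (hy : y ∈ K₂) :
    ‖⟪x, y⟫_𝕜‖ ≤ cosAngle K₁ K₂ * (‖x‖ * ‖y‖) := by
  rcases eq_or_ne x 0 with rfl | hx₀
  · simp
  rcases eq_or_ne y 0 with rfl | hy₀
  · simp
  have hunit : ‖⟪(‖x‖⁻¹ : 𝕜) • x, (‖y‖⁻¹ : 𝕜) • y⟫_𝕜‖ ≤ cosAngle K₁ K₂ :=
    le_csSup (bddAbove_cosAngle_set K₁ K₂)
      ⟨_, K₁.smul_mem _ hx, _, K₂.smul_mem _ hy, norm_smul_inv_norm hx₀, norm_smul_inv_norm hy₀, rfl⟩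
  have hpos : 0 < ‖x‖ * ‖y‖ := by positivity
  rw [inner_smul_left, inner_smul_right, norm_mul, norm_mul, norm_conj, norm_inv, norm_inv,
    norm_ofReal, norm_ofReal, abs_norm, abs_norm, ← mul_assoc, ← mul_inv] at hunit
  rwa [inv_mul_le_iff₀ hpos, mul_comm] at hunit

theorem norm_add_sq_le_one_add_cosAngle_mul {x y : E} (hx : x ∈ K₁) (hy : y ∈ K₂) :
    ‖x + y‖ ^ 2 ≤ (1 + cosAngle K₁ K₂) * (‖x‖ ^ 2 + ‖y‖ ^ 2) := by
  have hinner : re ⟪x, y⟫_𝕜 ≤ cosAngle K₁ K₂ * (‖x‖ * ‖y‖) :=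
    (re_le_norm _).trans (norm_inner_le_cosAngle_mul hx hy)
  have hamgm : 2 * (‖x‖ * ‖y‖) ≤ ‖x‖ ^ 2 + ‖y‖ ^ 2 := two_mul_le_add_sq _ _ |>.trans_eq' (by ring)
  rw [@norm_add_sq 𝕜]
  nlinarith [mul_le_mul_of_nonneg_left hamgm (cosAngle_nonneg K₁ K₂)]

variable (K₁ K₂) in
theorem norm_sq_starProjection_add_le [K₁.HasOrthogonalProjection] [K₂.HasOrthogonalProjection]
    (x : E) :
    ‖K₁.starProjection x‖ ^ 2 + ‖K₂.starProjection x‖ ^ 2 ≤ (1 + cosAngle K₁ K₂) * ‖x‖ ^ 2 := by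
  set a := K₁.starProjection x
  set b := K₂.starProjection x
  set s := ‖a‖ ^ 2 + ‖b‖ ^ 2
  have hs : s ≤ ‖a + b‖ * ‖x‖ :=
    calc s = re ⟪a + b, x⟫_𝕜 := by
          rw [inner_add_left, map_add, re_inner_starProjection_eq_normSq,
            re_inner_starProjection_eq_normSq]
          rfl
      _ ≤ ‖a + b‖ * ‖x‖ := (re_le_norm _).trans (norm_inner_le_norm _ _)
  have hab : ‖a + b‖ ^ 2 ≤ (1 + cosAngle K₁ K₂) * s :=
    norm_add_sq_le_one_add_cosAngle_mul (K₁.starProjection_apply_mem x)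
      (K₂.starProjection_apply_mem x)
  have hs₀ : 0 ≤ s := by positivity
  -- `s² ≤ ‖a + b‖² ‖x‖² ≤ (1 + c) s ‖x‖²`; divide by `s`.
  rcases hs₀.eq_or_lt with hs₀ | hs₀
  · rw [← hs₀]
    exact mul_nonneg (by linarith [cosAngle_nonneg K₁ K₂]) (sq_nonneg _)
  refine le_of_mul_le_mul_left ?_ hs₀
  calc s * s ≤ ‖a + b‖ ^ 2 * ‖x‖ ^ 2 := by
        rw [← mul_pow, sq]; exact mul_self_le_mul_self hs₀.le hs
    _ ≤ (1 + cosAngle K₁ K₂) * s * ‖x‖ ^ 2 := by gcongr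
    _ = s * ((1 + cosAngle K₁ K₂) * ‖x‖ ^ 2) := by ring

end Submodule

namespace LinearMap.IsSymmetric

variable {T : E →ₗ[𝕜] E}

theorem inner_map_self_add_of_mem_ker (hT : T.IsSymmetric) {u : E} (hu : u ∈ ker T) (y : E) :
    ⟪u + y, T (u + y)⟫_𝕜 = ⟪y, T y⟫_𝕜 := by
  rw [mem_ker] at hu
  rw [map_add, hu, zero_add, inner_add_left, ← hT, hu, inner_zero_left, zero_add]

theorem le_re_inner_map_self_of_gap (hT : T.IsSymmetric) [(ker T).HasOrthogonalProjection] {v : ℝ}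
    (hgap : ∀ x ∈ (ker T)ᗮ, v * ‖x‖ ^ 2 ≤ re ⟪x, T x⟫_𝕜) (x : E) :
    v * (‖x‖ ^ 2 - ‖(ker T).starProjection x‖ ^ 2) ≤ re ⟪x, T x⟫_𝕜 := by
  calc v * (‖x‖ ^ 2 - ‖(ker T).starProjection x‖ ^ 2) = v * ‖(ker T)ᗮ.starProjection x‖ ^ 2 := by
        rw [(ker T).norm_sq_eq_add_norm_sq_starProjection x, add_sub_cancel_left]
    _ ≤ re ⟪(ker T)ᗮ.starProjection x, T ((ker T)ᗮ.starProjection x)⟫_𝕜 :=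
        hgap _ ((ker T)ᗮ.starProjection_apply_mem x)
    _ = re ⟪x, T x⟫_𝕜 := by
        rw [← hT.inner_map_self_add_of_mem_ker ((ker T).starProjection_apply_mem x),
          Submodule.starProjection_add_starProjection_orthogonal]

end LinearMap.IsSymmetric

end

theorem kitaev_geometric_lemma_general
    {V : Type*} [NormedAddCommGroup V] [InnerProductSpace ℂ V] [FiniteDimensional ℂ V]
    (A₁ A₂ : V →ₗ[ℂ] V)
    (hA₁_sa : ∀ x y : V, ⟪A₁ x, y⟫_ℂ = ⟪x, A₁ y⟫_ℂ)
    (hA₂_sa : ∀ x y : V, ⟪A₂ x, y⟫_ℂ = ⟪x, A₂ y⟫_ℂ)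
    (v : ℝ) (hv : 0 < v)
    (hgap₁ : ∀ x ∈ (LinearMap.ker A₁)ᗮ, v * ‖x‖ ^ 2 ≤ (⟪x, A₁ x⟫_ℂ).re)
    (hgap₂ : ∀ x ∈ (LinearMap.ker A₂)ᗮ, v * ‖x‖ ^ 2 ≤ (⟪x, A₂ x⟫_ℂ).re)
    (c : ℝ)
    (hc : c = sSup {r : ℝ | ∃ x ∈ LinearMap.ker A₁, ∃ y ∈ LinearMap.ker A₂,
        ‖x‖ = 1 ∧ ‖y‖ = 1 ∧ r = ‖⟪x, y⟫_ℂ‖}) :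
    ∀ x : V, v * (1 - c) * ‖x‖ ^ 2 ≤ (⟪x, (A₁ + A₂) x⟫_ℂ).re := by
  intro x
  have hcos : c = (LinearMap.ker A₁).cosAngle (LinearMap.ker A₂) := hc
  have h₁ := LinearMap.IsSymmetric.le_re_inner_map_self_of_gap hA₁_sa hgap₁ x
  have h₂ := LinearMap.IsSymmetric.le_re_inner_map_self_of_gap hA₂_sa hgap₂ x
  have hproj := Submodule.norm_sq_starProjection_add_le (LinearMap.ker A₁) (LinearMap.ker A₂) x
  rw [← hcos] at hproj
  rw [RCLike.re_to_complex] at h₁ h₂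
  rw [LinearMap.add_apply, inner_add_right, Complex.add_re]
  nlinarith [mul_le_mul_of_nonneg_left hproj hv.le]

/-- **Kitaev's geometric lemma** (Lemma 14.4 of Kitaev–Shen–Vyalyi).
If `A₁, A₂` are positive-semidefinite self-adjoint operators whose kernels intersect
trivially, each with spectral gap at least `v` (i.e. `⟨x, Aᵢ x⟩ ≥ v‖x‖²` for `x ⟂ ker Aᵢ`),
and `c = cos θ` is the cosine of the angle between the kernels, then
`A₁ + A₂ ⪰ v (1 − c)`. -/
theorem kitaev_geometric_lemma
    {V : Type*} [NormedAddCommGroup V] [InnerProductSpace ℂ V] [FiniteDimensional ℂ V]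
    (A₁ A₂ : V →ₗ[ℂ] V)
    (hA₁_sa : ∀ x y : V, ⟪A₁ x, y⟫_ℂ = ⟪x, A₁ y⟫_ℂ)
    (hA₂_sa : ∀ x y : V, ⟪A₂ x, y⟫_ℂ = ⟪x, A₂ y⟫_ℂ)
    (hA₁_pos : ∀ x : V, 0 ≤ (⟪x, A₁ x⟫_ℂ).re)
    (hA₂_pos : ∀ x : V, 0 ≤ (⟪x, A₂ x⟫_ℂ).re)
    (htriv : LinearMap.ker A₁ ⊓ LinearMap.ker A₂ = ⊥)
    (v : ℝ) (hv : 0 < v)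
    (hgap₁ : ∀ x ∈ (LinearMap.ker A₁)ᗮ, v * ‖x‖ ^ 2 ≤ (⟪x, A₁ x⟫_ℂ).re)
    (hgap₂ : ∀ x ∈ (LinearMap.ker A₂)ᗮ, v * ‖x‖ ^ 2 ≤ (⟪x, A₂ x⟫_ℂ).re)
    (c : ℝ)
    (hc : c = sSup {r : ℝ | ∃ x ∈ LinearMap.ker A₁, ∃ y ∈ LinearMap.ker A₂,
        ‖x‖ = 1 ∧ ‖y‖ = 1 ∧ r = ‖⟪x, y⟫_ℂ‖}) :
    ∀ x : V, v * (1 - c) * ‖x‖ ^ 2 ≤ (⟪x, (A₁ + A₂) x⟫_ℂ).re :=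
  kitaev_geometric_lemma_general A₁ A₂ hA₁_sa hA₂_sa v hv hgap₁ hgap₂ c hc
end

section
/- Let V be a finite-dimensional complex inner product space, let H₁, H₂ be positive-semidefinite self-adjoint operators on V, and let W = ker H₁. Suppose g > 0 is such that ⟨x, H₁ x⟩ ≥ g‖x‖² for every x orthogonal to W. Let 0 ≤ α < 1 and let ω ∈ V be a unit vector with ⟨ω, (H₁ + H₂) ω⟩ ≤ α g. Then there exists a unit vector η ∈ W such that |⟨ω, η⟩|² ≥ 1 − α. -/
open scoped InnerProductSpace

/-!
Split `ω = P ω + Q ω` along `ker H₁ ⊕ (ker H₁)ᗮ`. Since `H₁` is self-adjoint and kills `P ω`, the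
energy of `ω` under `H₁` is that of `Q ω`, so the gap gives `g ‖Q ω‖² ≤ ⟪ω, H₁ ω⟫ ≤ α g`, i.e.
`‖Q ω‖² ≤ α`. By Pythagoras `‖P ω‖² ≥ 1 - α > 0`, and the normalisation `η = P ω / ‖P ω‖` has
overlap `|⟪ω, η⟫| = ‖P ω‖` with `ω`.
-/

section

variable {𝕜 E : Type*} [RCLike 𝕜] [NormedAddCommGroup E] [InnerProductSpace 𝕜 E]

namespace LinearMap.IsSymmetric

variable {T : E →ₗ[𝕜] E}

theorem inner_add_map_add_of_mem_ker (hT : T.IsSymmetric) {w : E} (hw : w ∈ ker T) (v : E) :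
    ⟪v + w, T (v + w)⟫_𝕜 = ⟪v, T v⟫_𝕜 := by
  rw [mem_ker] at hw
  rw [map_add, hw, add_zero, inner_add_left, ← hT w v, hw, inner_zero_left, add_zero]

theorem inner_map_starProjection_orthogonal_ker (hT : T.IsSymmetric)
    [(ker T).HasOrthogonalProjection] (x : E) :
    ⟪(ker T)ᗮ.starProjection x, T ((ker T)ᗮ.starProjection x)⟫_𝕜 = ⟪x, T x⟫_𝕜 := by
  have hsplit : (ker T)ᗮ.starProjection x + (ker T).starProjection x = x := by
    rw [add_comm, Submodule.starProjection_add_starProjection_orthogonal]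
  rw [← hT.inner_add_map_add_of_mem_ker ((ker T).starProjection_apply_mem x), hsplit]

end LinearMap.IsSymmetric

theorem Submodule.exists_mem_norm_eq_one_norm_inner_eq (K : Submodule 𝕜 E)
    [K.HasOrthogonalProjection] {x : E} (hx : K.starProjection x ≠ 0) :
    ∃ η ∈ K, ‖η‖ = 1 ∧ ‖⟪x, η⟫_𝕜‖ = ‖K.starProjection x‖ := by
  set w := K.starProjection x
  have hwK : w ∈ K := K.starProjection_apply_mem x
  have hw : ‖w‖ ≠ 0 := norm_ne_zero_iff.mpr hx
  have hinner : ⟪x, w⟫_𝕜 = ⟪w, w⟫_𝕜 := by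
    rw [K.inner_starProjection_left_eq_right, K.starProjection_eq_self_iff.mpr hwK]
  refine ⟨(‖w‖ : 𝕜)⁻¹ • w, K.smul_mem _ hwK, ?_, ?_⟩
  · rw [norm_smul, norm_inv, RCLike.norm_ofReal, abs_norm, inv_mul_cancel₀ hw]
  · rw [inner_smul_right, hinner, inner_self_eq_norm_sq_to_K, norm_mul, norm_inv, norm_pow,
      RCLike.norm_ofReal, abs_norm]
    field_simp

end

theorem step_one_general
    {V : Type*} [NormedAddCommGroup V] [InnerProductSpace ℂ V] [FiniteDimensional ℂ V]
    (H₁ H₂ : V →ₗ[ℂ] V)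
    (hH₁_sa : ∀ x y : V, ⟪H₁ x, y⟫_ℂ = ⟪x, H₁ y⟫_ℂ)
    (hH₂_pos : ∀ x : V, 0 ≤ (⟪x, H₂ x⟫_ℂ).re)
    (g : ℝ) (hg : 0 < g)
    (hgap : ∀ x ∈ (LinearMap.ker H₁)ᗮ, g * ‖x‖ ^ 2 ≤ (⟪x, H₁ x⟫_ℂ).re)
    (α : ℝ) (hα₁ : α < 1)
    (ω : V) (hω : ‖ω‖ = 1)
    (henergy : (⟪ω, (H₁ + H₂) ω⟫_ℂ).re ≤ α * g) :
    ∃ η ∈ LinearMap.ker H₁, ‖η‖ = 1 ∧ 1 - α ≤ ‖⟪ω, η⟫_ℂ‖ ^ 2 := by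
  set K := LinearMap.ker H₁
  have hH₁_energy : (⟪ω, H₁ ω⟫_ℂ).re ≤ α * g := by
    have := hH₂_pos ω
    rw [LinearMap.add_apply, inner_add_right, Complex.add_re] at henergy
    linarith
  have hperp : ‖Kᗮ.starProjection ω‖ ^ 2 ≤ α := by
    refine le_of_mul_le_mul_left ?_ hg
    calc g * ‖Kᗮ.starProjection ω‖ ^ 2
        ≤ (⟪Kᗮ.starProjection ω, H₁ (Kᗮ.starProjection ω)⟫_ℂ).re :=
          hgap _ (Submodule.coe_mem _)
      _ = (⟪ω, H₁ ω⟫_ℂ).re := by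
        rw [LinearMap.IsSymmetric.inner_map_starProjection_orthogonal_ker hH₁_sa]
      _ ≤ g * α := by linarith
  have hpar : 1 - α ≤ ‖K.starProjection ω‖ ^ 2 := by
    have := K.norm_sq_eq_add_norm_sq_starProjection ω
    rw [hω] at this
    linarith
  have hne : K.starProjection ω ≠ 0 := by
    intro h
    rw [h, norm_zero] at hpar
    linarith
  obtain ⟨η, hηK, hη, hωη⟩ := K.exists_mem_norm_eq_one_norm_inner_eq hne
  exact ⟨η, hηK, hη, hωη ▸ hpar⟩

/-- **Lemma (Step one).** If `H₁, H₂` are positive-semidefinite self-adjoint operators,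
`H₁` has spectral gap at least `g` (i.e. `⟨x, H₁ x⟩ ≥ g‖x‖²` for `x ⟂ ker H₁`), and `ω` is
a unit vector with energy `⟨ω, (H₁ + H₂) ω⟩ ≤ α g` for some `0 ≤ α < 1`, then there is a
unit vector `η ∈ ker H₁` with `|⟨ω, η⟩|² ≥ 1 − α`. -/
theorem step_one
    {V : Type*} [NormedAddCommGroup V] [InnerProductSpace ℂ V] [FiniteDimensional ℂ V]
    (H₁ H₂ : V →ₗ[ℂ] V)
    (hH₁_sa : ∀ x y : V, ⟪H₁ x, y⟫_ℂ = ⟪x, H₁ y⟫_ℂ)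
    (hH₂_sa : ∀ x y : V, ⟪H₂ x, y⟫_ℂ = ⟪x, H₂ y⟫_ℂ)
    (hH₁_pos : ∀ x : V, 0 ≤ (⟪x, H₁ x⟫_ℂ).re)
    (hH₂_pos : ∀ x : V, 0 ≤ (⟪x, H₂ x⟫_ℂ).re)
    (g : ℝ) (hg : 0 < g)
    (hgap : ∀ x ∈ (LinearMap.ker H₁)ᗮ, g * ‖x‖ ^ 2 ≤ (⟪x, H₁ x⟫_ℂ).re)
    (α : ℝ) (hα₀ : 0 ≤ α) (hα₁ : α < 1)
    (ω : V) (hω : ‖ω‖ = 1)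
    (henergy : (⟪ω, (H₁ + H₂) ω⟫_ℂ).re ≤ α * g) :
    ∃ η ∈ LinearMap.ker H₁, ‖η‖ = 1 ∧ 1 - α ≤ ‖⟪ω, η⟫_ℂ‖ ^ 2 :=
  step_one_general H₁ H₂ hH₁_sa hH₂_pos g hg hgap α hα₁ ω hω henergy
end

section
/- Let T ≥ 1 be a natural number and let C = ℂ^{T+1} with standard orthonormal basis e₀, …, e_T. Let A, P₁, P₂ be nontrivial finite-dimensional complex inner product spaces, let a₀ ∈ A be a unit vector, let ψ ∈ P₁ ⊗ P₂ be a unit vector, and let w₁, …, w_T ∈ A ⊗ (P₁ ⊗ P₂) be unit vectors. Define the history state η = (1/√(T+1)) (e₀ ⊗ (a₀ ⊗ ψ) + Σ_{t=1}^{T} e_t ⊗ w_t) in C ⊗ (A ⊗ (P₁ ⊗ P₂)). Suppose ψ₁ ∈ (C ⊗ A) ⊗ P₁ and ψ₂ ∈ P₂ are unit vectors and ε ≥ 0 satisfy |⟨η, ι(ψ₁ ⊗ ψ₂)⟩|² ≥ 1 − ε, where ι is the canonical inner-product-preserving isomorphism ((C ⊗ A) ⊗ P₁) ⊗ P₂ ≅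 C ⊗ (A ⊗ (P₁ ⊗ P₂)). Then there exists a unit vector L ∈ P₁ such that |⟨ψ, L ⊗ ψ₂⟩|² ≥ 1 − ε(T+1). -/
open scoped InnerProductSpace

/-- The tensor product of two vectors: `(u ⊗ v)(i,j) = uᵢ · vⱼ`. -/
noncomputable def tensorVec {ι κ : Type*} [Fintype ι] [Fintype κ]
    (u : EuclideanSpace ℂ ι) (v : EuclideanSpace ℂ κ) : EuclideanSpace ℂ (ι × κ) :=
  WithLp.toLp 2 (fun p : ι × κ => u p.1 * v p.2)

/-- The canonical inner-product-preserving isomorphism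
`((C ⊗ A) ⊗ P₁) ⊗ P₂ ≅ C ⊗ (A ⊗ (P₁ ⊗ P₂))`, realized as reindexing. -/
noncomputable def reassoc {ιC ιA ι₁ ι₂ : Type*} [Fintype ιC] [Fintype ιA] [Fintype ι₁] [Fintype ι₂]
    (x : EuclideanSpace ℂ (((ιC × ιA) × ι₁) × ι₂)) :
    EuclideanSpace ℂ (ιC × (ιA × (ι₁ × ι₂))) :=
  WithLp.toLp 2 (fun p : ιC × (ιA × (ι₁ × ι₂)) => x (((p.1, p.2.1), p.2.2.1), p.2.2.2))

/-!
Slice the product state `X = ψ₁ ⊗ ψ₂` along the clock, `⟪e_t ⊗ v, X⟫ = ⟪v, X_t⟫`, where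
`∑ ‖X_t‖² = 1`. For `t ≠ 0` the overlap with `w_t` is at most `‖X_t‖`. For `t = 0` we have
`X_0 = φ ⊗ ψ₂`, and contracting the ancilla with `a₀` gives `⟪a₀ ⊗ ψ, X_0⟫ = ⟪ψ, L' ⊗ ψ₂⟫` with
`‖L'‖ ≤ ‖φ‖ = ‖X_0‖`; normalising `L'` to `L`, this overlap is at most `q ‖X_0‖` with
`q = |⟪ψ, L ⊗ ψ₂⟫|`. Cauchy–Schwarz over the clock gives `(T + 1)(1 - ε) ≤ q² + T`.
-/

open scoped ComplexConjugate
open Finset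

lemma exists_norm_eq_one_and_eq_norm_smul {𝕜 E : Type*} [RCLike 𝕜] [NormedAddCommGroup E]
    [NormedSpace 𝕜 E] [Nontrivial E] (v : E) : ∃ u : E, ‖u‖ = 1 ∧ v = (‖v‖ : 𝕜) • u := by
  rcases eq_or_ne v 0 with rfl | hv
  · obtain ⟨x, hx⟩ := exists_ne (0 : E)
    exact ⟨(‖x‖⁻¹ : 𝕜) • x, norm_smul_inv_norm hx, by simp⟩
  · refine ⟨(‖v‖⁻¹ : 𝕜) • v, norm_smul_inv_norm hv, ?_⟩
    rw [smul_smul, mul_inv_cancel₀ (by simpa using hv), one_smul]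

namespace EuclideanSpace

variable {ι κ ν : Type*}

noncomputable def slice (X : EuclideanSpace ℂ (ι × κ)) (i : ι) : EuclideanSpace ℂ κ :=
  WithLp.toLp 2 fun k => X (i, k)

@[simp] lemma slice_apply (X : EuclideanSpace ℂ (ι × κ)) (i : ι) (k : κ) :
    X.slice i k = X (i, k) := rfl

variable [Fintype ι] [Fintype κ] [Fintype ν]

noncomputable def partialInner (a : EuclideanSpace ℂ ι) (X : EuclideanSpace ℂ (ι × κ)) :
    EuclideanSpace ℂ κ :=
  ∑ i, conj (a i) • X.slice i

noncomputable def prodAssoc :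
    EuclideanSpace ℂ ((ι × κ) × ν) ≃ₗᵢ[ℂ] EuclideanSpace ℂ (ι × (κ × ν)) :=
  LinearIsometryEquiv.piLpCongrLeft 2 ℂ ℂ (Equiv.prodAssoc ι κ ν)

@[simp] lemma prodAssoc_apply (x : EuclideanSpace ℂ ((ι × κ) × ν)) (p : ι × (κ × ν)) :
    prodAssoc x p = x ((p.1, p.2.1), p.2.2) := rfl

lemma sum_norm_slice_sq (X : EuclideanSpace ℂ (ι × κ)) : ∑ i, ‖X.slice i‖ ^ 2 = ‖X‖ ^ 2 := by
  simp only [norm_sq_eq, slice_apply, Fintype.sum_prod_type]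

lemma norm_partialInner_le (a : EuclideanSpace ℂ ι) (X : EuclideanSpace ℂ (ι × κ)) :
    ‖a.partialInner X‖ ≤ ‖a‖ * ‖X‖ :=
  calc ‖a.partialInner X‖ ≤ ∑ i, ‖a i‖ * ‖X.slice i‖ :=
        (norm_sum_le _ _).trans_eq (by simp [norm_smul])
    _ ≤ √(∑ i, ‖a i‖ ^ 2) * √(∑ i, ‖X.slice i‖ ^ 2) := Real.sum_mul_le_sqrt_mul_sqrt _ _ _
    _ = ‖a‖ * ‖X‖ := by
        rw [← norm_sq_eq, sum_norm_slice_sq, Real.sqrt_sq (norm_nonneg _),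
          Real.sqrt_sq (norm_nonneg _)]

end EuclideanSpace

section

open EuclideanSpace

variable {ι κ ν : Type*} [Fintype ι] [Fintype κ] [Fintype ν]

lemma reassoc_eq_prodAssoc_prodAssoc {ι₂ : Type*} [Fintype ι₂]
    (x : EuclideanSpace ℂ (((ι × κ) × ν) × ι₂)) : reassoc x = prodAssoc (prodAssoc x) := rfl

lemma tensorVec_smul_left (c : ℂ) (u : EuclideanSpace ℂ ι) (v : EuclideanSpace ℂ κ) :
    tensorVec (c • u) v = c • tensorVec u v := by
  ext; simp [tensorVec, mul_assoc]

lemma slice_tensorVec (u : EuclideanSpace ℂ ι) (v : EuclideanSpace ℂ κ) (i : ι) :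
    (tensorVec u v).slice i = u i • v := by
  ext; simp [tensorVec]

lemma norm_tensorVec (u : EuclideanSpace ℂ ι) (v : EuclideanSpace ℂ κ) :
    ‖tensorVec u v‖ = ‖u‖ * ‖v‖ := by
  rw [← sq_eq_sq₀ (norm_nonneg _) (by positivity), ← sum_norm_slice_sq, mul_pow, norm_sq_eq u,
    sum_mul]
  simp [slice_tensorVec, norm_smul, mul_pow]

lemma inner_tensorVec_left (a : EuclideanSpace ℂ ι) (u : EuclideanSpace ℂ κ)
    (X : EuclideanSpace ℂ (ι × κ)) : ⟪tensorVec a u, X⟫_ℂ = ∑ i, conj (a i) * ⟪u, X.slice i⟫_ℂ := by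
  simp only [PiLp.inner_apply, RCLike.inner_apply, Fintype.sum_prod_type, mul_sum, tensorVec,
    slice_apply, map_mul]
  exact sum_congr rfl fun i _ => sum_congr rfl fun k _ => by ring

lemma inner_tensorVec_single_left [DecidableEq ι] (i : ι) (u : EuclideanSpace ℂ κ)
    (X : EuclideanSpace ℂ (ι × κ)) : ⟪tensorVec (single i 1) u, X⟫_ℂ = ⟪u, X.slice i⟫_ℂ := by
  rw [inner_tensorVec_left, Fintype.sum_eq_single i fun j hj => by simp [hj]]
  simp

lemma inner_tensorVec_eq_inner_partialInner (a : EuclideanSpace ℂ ι) (u : EuclideanSpace ℂ κ)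
    (X : EuclideanSpace ℂ (ι × κ)) : ⟪tensorVec a u, X⟫_ℂ = ⟪u, a.partialInner X⟫_ℂ := by
  simp only [inner_tensorVec_left, partialInner, inner_sum, inner_smul_right]

lemma partialInner_prodAssoc_tensorVec (a : EuclideanSpace ℂ ι) (φ : EuclideanSpace ℂ (ι × κ))
    (v : EuclideanSpace ℂ ν) :
    a.partialInner (prodAssoc (tensorVec φ v)) = tensorVec (a.partialInner φ) v := by
  ext ⟨k, n⟩
  simp [partialInner, tensorVec, sum_mul, mul_assoc]

lemma norm_inner_tensorVec_prodAssoc_le {a : EuclideanSpace ℂ ι} (ha : ‖a‖ ≤ 1)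
    (ψ : EuclideanSpace ℂ (κ × ν)) (φ : EuclideanSpace ℂ (ι × κ)) (v : EuclideanSpace ℂ ν)
    {L : EuclideanSpace ℂ κ} (hL : a.partialInner φ = (‖a.partialInner φ‖ : ℂ) • L) :
    ‖⟪tensorVec a ψ, prodAssoc (tensorVec φ v)⟫_ℂ‖ ≤ ‖⟪ψ, tensorVec L v⟫_ℂ‖ * ‖φ‖ := by
  have hLφ : ‖a.partialInner φ‖ ≤ ‖φ‖ :=
    (norm_partialInner_le a φ).trans (mul_le_of_le_one_left (norm_nonneg _) ha)
  rw [inner_tensorVec_eq_inner_partialInner, partialInner_prodAssoc_tensorVec, hL,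
    tensorVec_smul_left, inner_smul_right, norm_mul, Complex.norm_real, norm_norm, mul_comm]
  gcongr

lemma norm_inner_sum_tensorVec_single_sq_le [DecidableEq ι] (v : ι → EuclideanSpace ℂ κ)
    (X : EuclideanSpace ℂ (ι × κ)) (f : ι → ℝ)
    (hf : ∀ i, ‖⟪v i, X.slice i⟫_ℂ‖ ≤ f i * ‖X.slice i‖) :
    ‖⟪∑ i, tensorVec (single i 1) (v i), X⟫_ℂ‖ ^ 2 ≤ (∑ i, f i ^ 2) * ‖X‖ ^ 2 := by
  simp only [sum_inner, inner_tensorVec_single_left]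
  calc ‖∑ i, ⟪v i, X.slice i⟫_ℂ‖ ^ 2 ≤ (∑ i, f i * ‖X.slice i‖) ^ 2 :=
        pow_le_pow_left₀ (norm_nonneg _) ((norm_sum_le _ _).trans (sum_le_sum fun i _ => hf i)) 2
    _ ≤ (∑ i, f i ^ 2) * ‖X‖ ^ 2 := by
        rw [← sum_norm_slice_sq]
        exact sum_mul_sq_le_sq_mul_sq _ _ _

lemma norm_inner_history_sq_le [DecidableEq ι] (i₀ : ι) (x : EuclideanSpace ℂ κ)
    {w : ι → EuclideanSpace ℂ κ} (hw : ∀ i, i ≠ i₀ → ‖w i‖ ≤ 1) (X : EuclideanSpace ℂ (ι × κ))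
    {q : ℝ} (hx : ‖⟪x, X.slice i₀⟫_ℂ‖ ≤ q * ‖X.slice i₀‖) :
    ‖⟪tensorVec (single i₀ 1) x +
        ∑ i ∈ univ.filter (· ≠ i₀), tensorVec (single i 1) (w i), X⟫_ℂ‖ ^ 2 ≤
      (q ^ 2 + (Fintype.card ι - 1)) * ‖X‖ ^ 2 := by
  have key := norm_inner_sum_tensorVec_single_sq_le (fun i => if i = i₀ then x else w i) X
    (fun i => if i = i₀ then q else 1) fun i => by
      split_ifs with hi
      · exact hi ▸ hx
      · exact (norm_inner_le_norm _ _).trans (by gcongr; exact hw i hi)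
  convert key using 3
  · simp [apply_ite, sum_ite, filter_eq']
  · simp [sum_ite, filter_eq', filter_ne', card_erase_of_mem,
      Nat.cast_sub (Fintype.card_pos_iff.mpr ⟨i₀⟩)]

end

theorem step_two_general
    (T dA d₁ d₂ : ℕ) (hd₁ : 1 ≤ d₁)
    (a₀ : EuclideanSpace ℂ (Fin dA)) (ha₀ : ‖a₀‖ = 1)
    (ψ : EuclideanSpace ℂ (Fin d₁ × Fin d₂))
    (w : Fin (T + 1) → EuclideanSpace ℂ (Fin dA × (Fin d₁ × Fin d₂)))
    (hw : ∀ t, t ≠ 0 → ‖w t‖ = 1)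
    (η : EuclideanSpace ℂ (Fin (T + 1) × (Fin dA × (Fin d₁ × Fin d₂))))
    (hη : η = ((Real.sqrt (T + 1) : ℂ))⁻¹ •
      (tensorVec (EuclideanSpace.single 0 1) (tensorVec a₀ ψ) +
        ∑ t ∈ Finset.univ.filter (fun t : Fin (T + 1) => t ≠ 0),
          tensorVec (EuclideanSpace.single t 1) (w t)))
    (ψ₁ : EuclideanSpace ℂ ((Fin (T + 1) × Fin dA) × Fin d₁)) (hψ₁ : ‖ψ₁‖ = 1)
    (ψ₂ : EuclideanSpace ℂ (Fin d₂)) (hψ₂ : ‖ψ₂‖ = 1)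
    (ε : ℝ)
    (hclose : 1 - ε ≤ ‖⟪η, reassoc (tensorVec ψ₁ ψ₂)⟫_ℂ‖ ^ 2) :
    ∃ L : EuclideanSpace ℂ (Fin d₁),
      ‖L‖ = 1 ∧ 1 - ε * (T + 1) ≤ ‖⟪ψ, tensorVec L ψ₂⟫_ℂ‖ ^ 2 := by
  have : Nonempty (Fin d₁) := ⟨⟨0, hd₁⟩⟩
  set X := reassoc (tensorVec ψ₁ ψ₂)
  set φ := (EuclideanSpace.prodAssoc ψ₁).slice 0
  obtain ⟨L, hL, hφL⟩ := exists_norm_eq_one_and_eq_norm_smul (𝕜 := ℂ) (a₀.partialInner φ)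
  refine ⟨L, hL, ?_⟩
  have hX : ‖X‖ = 1 := by simp [X, reassoc_eq_prodAssoc_prodAssoc, norm_tensorVec, hψ₁, hψ₂]
  have h₀ : ‖⟪tensorVec a₀ ψ, X.slice 0⟫_ℂ‖ ≤ ‖⟪ψ, tensorVec L ψ₂⟫_ℂ‖ * ‖X.slice 0‖ := by
    have hX₀ : X.slice 0 = EuclideanSpace.prodAssoc (tensorVec φ ψ₂) := rfl
    rw [hX₀, LinearIsometryEquiv.norm_map, norm_tensorVec, hψ₂, mul_one]
    exact norm_inner_tensorVec_prodAssoc_le ha₀.le ψ φ ψ₂ hφL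
  have hhist := norm_inner_history_sq_le 0 _ (fun t ht => (hw t ht).le) X h₀
  simp only [hX, Fintype.card_fin, Nat.cast_add, Nat.cast_one, add_sub_cancel_right, one_pow,
    mul_one] at hhist
  rw [hη, inner_smul_left, norm_mul, mul_pow, Complex.norm_conj, norm_inv, Complex.norm_real,
    Real.norm_eq_abs, inv_pow, sq_abs, Real.sq_sqrt (by positivity),
    le_inv_mul_iff₀ (by positivity)] at hclose
  linarith

/-- **Lemma (Step two).** If a history state
`η = (1/√(T+1)) (e₀ ⊗ a₀ ⊗ ψ + Σ_{t=1}^T e_t ⊗ w_t)` has squared overlap at least `1 − ε`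
with a product state `ψ₁ ⊗ ψ₂` across the cut `(clock ⊗ ancilla ⊗ first proof)` versus
`(second proof)`, then the witness `ψ` is `(1 − ε(T+1))`-close to a product state
`L ⊗ ψ₂`. -/
theorem step_two
    (T dA d₁ d₂ : ℕ) (hT : 1 ≤ T) (hdA : 1 ≤ dA) (hd₁ : 1 ≤ d₁) (hd₂ : 1 ≤ d₂)
    (a₀ : EuclideanSpace ℂ (Fin dA)) (ha₀ : ‖a₀‖ = 1)
    (ψ : EuclideanSpace ℂ (Fin d₁ × Fin d₂)) (hψ : ‖ψ‖ = 1)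
    (w : Fin (T + 1) → EuclideanSpace ℂ (Fin dA × (Fin d₁ × Fin d₂)))
    (hw : ∀ t, t ≠ 0 → ‖w t‖ = 1)
    (η : EuclideanSpace ℂ (Fin (T + 1) × (Fin dA × (Fin d₁ × Fin d₂))))
    (hη : η = ((Real.sqrt (T + 1) : ℂ))⁻¹ •
      (tensorVec (EuclideanSpace.single 0 1) (tensorVec a₀ ψ) +
        ∑ t ∈ Finset.univ.filter (fun t : Fin (T + 1) => t ≠ 0),
          tensorVec (EuclideanSpace.single t 1) (w t)))
    (ψ₁ : EuclideanSpace ℂ ((Fin (T + 1) × Fin dA) × Fin d₁)) (hψ₁ : ‖ψ₁‖ = 1)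
    (ψ₂ : EuclideanSpace ℂ (Fin d₂)) (hψ₂ : ‖ψ₂‖ = 1)
    (ε : ℝ) (hε : 0 ≤ ε)
    (hclose : 1 - ε ≤ ‖⟪η, reassoc (tensorVec ψ₁ ψ₂)⟫_ℂ‖ ^ 2) :
    ∃ L : EuclideanSpace ℂ (Fin d₁),
      ‖L‖ = 1 ∧ 1 - ε * (T + 1) ≤ ‖⟪ψ, tensorVec L ψ₂⟫_ℂ‖ ^ 2 :=
  step_two_general T dA d₁ d₂ hd₁ a₀ ha₀ ψ w hw η hη ψ₁ hψ₁ ψ₂ hψ₂ ε hclose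
end

section
/- Let V be a finite-dimensional complex inner product space, let H₁ be a positive-semidefinite self-adjoint operator on V, and let H₂ be a self-adjoint operator with 0 ⪯ H₂ ⪯ I (i.e. 0 ≤ ⟨x, H₂ x⟩ ≤ ‖x‖² for all x). Let η, η' ∈ V be unit vectors with ⟨η, η'⟩ = 0 and H₁ η = 0, let 0 ≤ p ≤ 1, and set ω = √(1−p) η + √p η'. Then ⟨ω, (H₁ + H₂) ω⟩ ≥ (1−p)·⟨η, H₂ η⟩ − 2√((1−p)p). -/
open scoped InnerProductSpace

/-- The inequality obtained when combining the three steps of the soundness proof: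
if `H₁ ⪰ 0`, `0 ⪯ H₂ ⪯ I`, `η, η'` are orthogonal unit vectors with `H₁ η = 0`, and
`ω = √(1−p) η + √p η'` for `0 ≤ p ≤ 1`, then
`⟨ω, (H₁ + H₂) ω⟩ ≥ (1−p)⟨η, H₂ η⟩ − 2√((1−p)p)`. -/
theorem soundness_combination
    {V : Type*} [NormedAddCommGroup V] [InnerProductSpace ℂ V] [FiniteDimensional ℂ V]
    (H₁ H₂ : V →ₗ[ℂ] V)
    (hH₁_sa : ∀ x y : V, ⟪H₁ x, y⟫_ℂ = ⟪x, H₁ y⟫_ℂ)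
    (hH₂_sa : ∀ x y : V, ⟪H₂ x, y⟫_ℂ = ⟪x, H₂ y⟫_ℂ)
    (hH₁_pos : ∀ x : V, 0 ≤ (⟪x, H₁ x⟫_ℂ).re)
    (hH₂_pos : ∀ x : V, 0 ≤ (⟪x, H₂ x⟫_ℂ).re)
    (hH₂_le_one : ∀ x : V, (⟪x, H₂ x⟫_ℂ).re ≤ ‖x‖ ^ 2)
    (η η' : V) (hη : ‖η‖ = 1) (hη' : ‖η'‖ = 1) (horth : ⟪η, η'⟫_ℂ = 0)
    (hker : H₁ η = 0)
    (p : ℝ) (hp₀ : 0 ≤ p) (hp₁ : p ≤ 1)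
    (ω : V) (hω : ω = (Real.sqrt (1 - p) : ℂ) • η + (Real.sqrt p : ℂ) • η') :
    (1 - p) * (⟪η, H₂ η⟫_ℂ).re - 2 * Real.sqrt ((1 - p) * p)
      ≤ (⟪ω, (H₁ + H₂) ω⟫_ℂ).re := by
  set a := Real.sqrt (1 - p) with ha_def
  set b := Real.sqrt p with hb_def
  have ha2 : a * a = 1 - p := Real.mul_self_sqrt (by linarith)
  have hb2 : b * b = p := Real.mul_self_sqrt hp₀
  have hab : a * b = Real.sqrt ((1 - p) * p) := (Real.sqrt_mul (by linarith) p).symm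
  set q := (⟪η, H₂ η⟫_ℂ).re with hq
  set r := (⟪η, H₂ η'⟫_ℂ).re with hr
  set s := (⟪η', H₂ η'⟫_ℂ).re with hs
  have hsym : ⟪η', H₂ η⟫_ℂ = starRingEnd ℂ ⟪η, H₂ η'⟫_ℂ := by
    rw [← hH₂_sa η' η, ← inner_conj_symm]
  have hsym_re : (⟪η', H₂ η⟫_ℂ).re = r := by rw [hsym, Complex.conj_re]
  -- expansion of the H₂ quadratic form at ω
  have hexp : (⟪ω, H₂ ω⟫_ℂ).re = (1 - p) * q + 2 * (a * b) * r + p * s := by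
    rw [hω]
    simp only [map_add, map_smul, inner_add_left, inner_add_right, inner_smul_left,
      inner_smul_right, Complex.conj_ofReal, hH₂_sa]
    simp only [Complex.add_re, Complex.mul_re, Complex.ofReal_re, Complex.ofReal_im,
      Complex.mul_im, hsym_re]
    rw [← hq, ← hs]
    have : (⟪η', H₂ η⟫_ℂ).im = - (⟪η, H₂ η'⟫_ℂ).im := by rw [hsym, Complex.conj_im]
    rw [this]
    ring_nf
    rw [show a ^ 2 = a * a by ring, show b ^ 2 = b * b by ring, ha2, hb2]
    ring
  -- r ≥ -1
  have hexp2 : (⟪η + η', H₂ (η + η')⟫_ℂ).re = q + 2 * r + s := by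
    simp only [map_add, inner_add_left, inner_add_right, Complex.add_re, hsym_re]
    rw [← hq, ← hs]; ring
  have hq1 : q ≤ 1 := by have := hH₂_le_one η; rwa [hη, one_pow] at this
  have hs1 : s ≤ 1 := by have := hH₂_le_one η'; rwa [hη', one_pow] at this
  have hr1 : -1 ≤ r := by
    have h0 := hH₂_pos (η + η')
    rw [hexp2] at h0
    linarith
  have hs0 : 0 ≤ s := hH₂_pos η'
  have hq0 : 0 ≤ q := hH₂_pos η
  have hab0 : 0 ≤ a * b := mul_nonneg (Real.sqrt_nonneg _) (Real.sqrt_nonneg _)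
  have h1 : 0 ≤ (⟪ω, H₁ ω⟫_ℂ).re := hH₁_pos ω
  have hsplit : (⟪ω, (H₁ + H₂) ω⟫_ℂ).re = (⟪ω, H₁ ω⟫_ℂ).re + (⟪ω, H₂ ω⟫_ℂ).re := by
    simp [inner_add_right]
  rw [hsplit, hexp, ← hab]
  nlinarith [mul_nonneg hp₀ hs0, mul_nonneg hab0 (by linarith : (0:ℝ) ≤ r + 1)]
end

section
/- Let N ≥ 1 and let U be a unitary N × N complex matrix such that every row of U has at most one nonzero entry. Let T ≥ 1 and 1 ≤ t ≤ T, and define the matrix H_t on ℂ^{T+1} ⊗ ℂ^N by H_t = (1/2)(E_{t,t} + E_{t−1,t−1}) ⊗ I_N − (1/2) E_{t,t−1} ⊗ U − (1/2) E_{t−1,t} ⊗ Uᴴ, where E_{i,j} is the (T+1) × (T+1) matrix unit with a 1 in position (i,j) and zeros elsewhere, ⊗ is the Kronecker product, and Uᴴ is the conjugate transpose. Then every row of H_t has at most 2 nonzero entries. -/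
/-!
Row `(p, q)` of `E_{a,b} ⊗ B` vanishes unless `p = a`, and is then row `q` of `B` placed in
block `b`. So for `p = t` only `E_{t,t} ⊗ I` and `E_{t,t-1} ⊗ U` contribute, each at most one
nonzero entry, and for `p = t - 1` only `E_{t-1,t-1} ⊗ I` and `E_{t-1,t} ⊗ Uᴴ`. Rows of `Uᴴ`
are columns of `U`, which are sparse because the rows of `U` are orthogonal: if row `i` has its
only nonzero entry in column `j`, its inner product with row `i'` is `U i j * star (U i' j)`.
-/

open scoped Kronecker Matrix

namespace Matrix

variable {l m n o α : Type*} [Fintype n] [DecidableEq α]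

def rowSupport [Zero α] (A : Matrix m n α) (i : m) : Finset n :=
  {j | A i j ≠ 0}

@[simp]
theorem mem_rowSupport [Zero α] {A : Matrix m n α} {i : m} {j : n} :
    j ∈ A.rowSupport i ↔ A i j ≠ 0 := by
  simp [rowSupport]

theorem card_rowSupport_add_le [DecidableEq n] [AddZeroClass α] (A B : Matrix m n α) (i : m) :
    ((A + B).rowSupport i).card ≤ (A.rowSupport i).card + (B.rowSupport i).card := by
  refine (Finset.card_le_card fun j hj => ?_).trans (Finset.card_union_le _ _)
  simp only [mem_rowSupport, add_apply, Finset.mem_union] at hj ⊢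
  by_contra! h
  simp [h.1, h.2] at hj

theorem card_rowSupport_sub_le [DecidableEq n] [SubtractionMonoid α] (A B : Matrix m n α)
    (i : m) :
    ((A - B).rowSupport i).card ≤ (A.rowSupport i).card + (B.rowSupport i).card := by
  refine (Finset.card_le_card fun j hj => ?_).trans (Finset.card_union_le _ _)
  simp only [mem_rowSupport, sub_apply, Finset.mem_union] at hj ⊢
  by_contra! h
  simp [h.1, h.2] at hj

theorem card_rowSupport_smul_le {R : Type*} [Zero α] [SMulZeroClass R α] (c : R)
    (A : Matrix m n α) (i : m) : ((c • A).rowSupport i).card ≤ (A.rowSupport i).card :=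
  Finset.card_le_card fun j hj => by
    simp only [mem_rowSupport, smul_apply] at hj ⊢
    exact fun h => hj (by rw [h, smul_zero])

theorem card_rowSupport_one_le [DecidableEq n] [Zero α] [One α] (i : n) :
    ((1 : Matrix n n α).rowSupport i).card ≤ 1 :=
  calc _ ≤ ({i} : Finset n).card := Finset.card_le_card fun j hj => by
          rw [Finset.mem_singleton]
          by_contra h
          exact mem_rowSupport.mp hj (one_apply_ne' h)
    _ = 1 := Finset.card_singleton i

theorem card_rowSupport_single_kronecker_le [DecidableEq l] [DecidableEq o] [Fintype o]
    [MulZeroClass α] (a : l) (b : o) (c : α) (B : Matrix m n α) (p : l) (q : m) :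
    ((single a b c ⊗ₖ B).rowSupport (p, q)).card ≤
      if p = a then (B.rowSupport q).card else 0 := by
  split_ifs with hp
  · subst hp
    calc _ ≤ ({b} ×ˢ B.rowSupport q).card := Finset.card_le_card fun ⟨x₁, x₂⟩ hx => by
            simp only [mem_rowSupport, kronecker_apply, Finset.mem_product,
              Finset.mem_singleton] at hx ⊢
            by_cases hx₁ : x₁ = b
            · exact ⟨hx₁, right_ne_zero_of_mul hx⟩
            · simp [single_apply_of_col_ne _ _ (Ne.symm hx₁)] at hx
      _ = _ := by simp
  · simp [rowSupport, single_apply_of_row_ne (Ne.symm hp)]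

theorem card_rowSupport_conjTranspose_le_one [Fintype m] [Semiring α] [StarRing α]
    [NoZeroDivisors α] {U : Matrix m n α} (hdiag : (U * Uᴴ).IsDiag)
    (hU : ∀ i, (U.rowSupport i).card ≤ 1) (j : n) : (Uᴴ.rowSupport j).card ≤ 1 := by
  refine Finset.card_le_one.mpr fun i hi i' hi' => ?_
  simp only [mem_rowSupport, conjTranspose_apply, star_ne_zero] at hi hi'
  by_contra hne
  have hrow : ∀ k, k ≠ j → U i k = 0 := fun k hk => by
    by_contra h
    exact hk (Finset.card_le_one.mp (hU i) k (by simpa) j (by simpa))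
  have : (U * Uᴴ) i i' = U i j * star (U i' j) := by
    rw [mul_apply, Finset.sum_eq_single j (fun k _ hk => by simp [hrow k hk]) (by simp)]
    rfl
  exact mul_ne_zero hi (star_ne_zero.mpr hi') (this ▸ hdiag hne)

end Matrix

open Matrix

/-- **Row-sparsity of the propagation terms of Kitaev's Hamiltonian.**
If `U` is a unitary `N × N` matrix with at most one nonzero entry per row (e.g. a
controlled-swap on arbitrarily many qubits), then each propagation term
`H_t = ½(E_{t,t} + E_{t−1,t−1}) ⊗ I − ½ E_{t,t−1} ⊗ U − ½ E_{t−1,t} ⊗ Uᴴ`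
has at most `2` nonzero entries in each row. -/
theorem propagation_term_row_sparse
    {N : ℕ} (U : Matrix (Fin N) (Fin N) ℂ)
    (hU : Uᴴ * U = 1)
    (hU_sparse : ∀ i : Fin N, (Finset.univ.filter fun j : Fin N => U i j ≠ 0).card ≤ 1)
    (T t : ℕ) (ht₁ : 1 ≤ t) (ht₂ : t ≤ T)
    (Ht : Matrix (Fin (T + 1) × Fin N) (Fin (T + 1) × Fin N) ℂ)
    (hHt : Ht =
      (1 / 2 : ℂ) • ((Matrix.single (⟨t, by omega⟩ : Fin (T + 1)) ⟨t, by omega⟩ 1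
            + Matrix.single (⟨t - 1, by omega⟩ : Fin (T + 1)) ⟨t - 1, by omega⟩ 1)
          ⊗ₖ (1 : Matrix (Fin N) (Fin N) ℂ))
        - (1 / 2 : ℂ) • ((Matrix.single (⟨t, by omega⟩ : Fin (T + 1)) ⟨t - 1, by omega⟩ 1)
          ⊗ₖ U)
        - (1 / 2 : ℂ) • ((Matrix.single (⟨t - 1, by omega⟩ : Fin (T + 1)) ⟨t, by omega⟩ 1)
          ⊗ₖ Uᴴ)) :
    ∀ r : Fin (T + 1) × Fin N,
      (Finset.univ.filter fun c : Fin (T + 1) × Fin N => Ht r c ≠ 0).card ≤ 2 := by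
  rintro ⟨p, q⟩
  have hUH_sparse : (Uᴴ.rowSupport q).card ≤ 1 :=
    card_rowSupport_conjTranspose_le_one (mul_eq_one_comm.mp hU ▸ isDiag_one) hU_sparse q
  have hτ : (⟨t, by omega⟩ : Fin (T + 1)) ≠ ⟨t - 1, by omega⟩ := by
    simp only [ne_eq, Fin.mk.injEq]; omega
  change (Ht.rowSupport (p, q)).card ≤ 2
  subst hHt
  grw [card_rowSupport_sub_le, card_rowSupport_sub_le, card_rowSupport_smul_le,
    card_rowSupport_smul_le, card_rowSupport_smul_le, add_kronecker, card_rowSupport_add_le,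
    card_rowSupport_single_kronecker_le, card_rowSupport_single_kronecker_le,
    card_rowSupport_single_kronecker_le, card_rowSupport_single_kronecker_le]
  have hU_sparse' : (U.rowSupport q).card ≤ 1 := hU_sparse q
  have hI_sparse := card_rowSupport_one_le (α := ℂ) q
  split_ifs <;> omega
end
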